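/- arXiv:0707.1753 — 3 statements merged into one kernel-verified Lean document; each statement's English description precedes it below -/
import Mathlib

section
/- Let R be a DVR with residue field F = R/℘, M a finite free R-module with bilinear form, M(i) the ℘^i-filtration submodules, and define the Jantzen layers J_i = (M(i)+℘M)/(M(i+1)+℘M) over F. If M admits dual bases with ⟨f_S, g_T⟩ = δ_{ST} d_T (d_T ≠ 0), then dim_F J_i = #{T : ν_℘(d_T) = i}, and consequently Σ_{i≥0} i · dim_F J_i = ν_℘(det(Gram matrix of M)). -/
/-!
In the coordinates of `f`, the pairing with `g T` reads off the `T`-th coordinate times `d T`.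
Hence, modulo `℘M`, the vectors of `M(i)` are exactly those whose coordinates with
`ν(d_T) < i` lie in `℘`, so `M(i) + ℘M` is a coordinatewise filtration and its `i`-th layer
is `F` to the power `#{T : ν(d_T) = i}`. The Gram matrix is `diag(d)`, so its valuation is
`Σ_T ν(d_T)`, which is the weighted count of the layer dimensions.
-/

open IsLocalRing

/-- `HasMultiplicity A M L n` : the `A`-module `M` has a composition series in which
exactly `n` factors are isomorphic to `L` (i.e. the composition multiplicity
`[M : L]` equals `n`). -/
def HasMultiplicity (A : Type*) [Ring A] (M : Type*) [AddCommGroup M] [Module A M]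
    (L : Type*) [AddCommGroup L] [Module A L] (n : ℕ) : Prop :=
  ∃ (m : ℕ) (c : ℕ → Submodule A M),
    c 0 = ⊥ ∧ c m = ⊤ ∧ (∀ j < m, c j ≤ c (j + 1)) ∧
    (∀ j < m, IsSimpleModule A
      (↥(c (j + 1)) ⧸ Submodule.comap (c (j + 1)).subtype (c j))) ∧
    n = Nat.card {j : Fin m //
      Nonempty ((↥(c (j.1 + 1)) ⧸ Submodule.comap (c (j.1 + 1)).subtype (c j.1)) ≃ₗ[A] L)}

namespace LinearEquiv

variable {A : Type*} [Ring A] {M M' : Type*} [AddCommGroup M] [Module A M]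
  [AddCommGroup M'] [Module A M']

noncomputable def subquotientMap (e : M ≃ₗ[A] M') (p q : Submodule A M) :
    (↥p ⧸ q.comap p.subtype) ≃ₗ[A]
      (↥(p.map (e : M →ₗ[A] M')) ⧸
        (q.map (e : M →ₗ[A] M')).comap (p.map (e : M →ₗ[A] M')).subtype) :=
  Submodule.Quotient.equiv _ _ (e.submoduleMap p) <| by
    ext ⟨x, hx⟩
    obtain ⟨y, hy, rfl⟩ := Submodule.mem_map.mp hx
    simp [Submodule.mem_map_equiv]

end LinearEquiv

namespace Submodule

variable {A : Type*} [Ring A] {ι : Type*} {φ : ι → Type*} [∀ i, AddCommGroup (φ i)]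
  [∀ i, Module A (φ i)]

noncomputable def piQuotientPiUnionEquiv (p : ∀ i, Submodule A (φ i)) {s u : Set ι}
    (hsu : Disjoint s u) :
    (↥(pi s p) ⧸ (pi (s ∪ u) p).comap (pi s p).subtype) ≃ₗ[A] ∀ i : u, φ i ⧸ p i := by
  classical
  let π : ↥(pi s p) →ₗ[A] ∀ i : u, φ i ⧸ p i :=
    LinearMap.pi fun i => (p i).mkQ ∘ₗ LinearMap.proj i.1 ∘ₗ (pi s p).subtype
  have hπ : Function.Surjective π := by
    intro v
    choose y hy using fun i : u => Quotient.mk_surjective (p i) (v i)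
    refine ⟨⟨fun i => if h : i ∈ u then y ⟨i, h⟩ else 0, fun i hi => ?_⟩, ?_⟩
    · simp [Set.disjoint_left.mp hsu hi]
    · funext i
      simp [π, i.2, hy]
  have hker : LinearMap.ker π = (pi (s ∪ u) p).comap (pi s p).subtype := by
    ext ⟨x, hx⟩
    simp only [LinearMap.mem_ker, mem_comap, subtype_apply, mem_pi, Set.mem_union]
    refine ⟨fun h i hi => hi.elim (hx i) fun hu => ?_, fun h => funext fun i => ?_⟩
    · simpa [π] using congrFun h ⟨i, hu⟩
    · simpa [π] using h i (Or.inr i.2)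
  exact (quotEquivOfEq _ _ hker.symm).trans (π.quotKerEquivOfSurjective hπ)

end Submodule

section HasMultiplicity

variable {A : Type*} [Ring A] {M M' L : Type*} [AddCommGroup M] [Module A M]
  [AddCommGroup M'] [Module A M'] [AddCommGroup L] [Module A L]

theorem HasMultiplicity.of_linearEquiv {n : ℕ} (h : HasMultiplicity A M L n) (e : M ≃ₗ[A] M') :
    HasMultiplicity A M' L n := by
  obtain ⟨m, c, hbot, htop, hmono, hsimple, hcount⟩ := h
  let e' : M →ₗ[A] M' := e
  refine ⟨m, fun j => (c j).map e', by simp [hbot], by simp [e', htop, e.range],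
    fun j hj => Submodule.map_mono (hmono j hj),
    fun j hj => (hsimple j hj).congr (e.subquotientMap _ _).symm, ?_⟩
  rw [hcount]
  exact Nat.card_congr <| Equiv.subtypeEquivRight fun j =>
    ⟨fun ⟨E⟩ => ⟨(e.subquotientMap _ _).symm.trans E⟩, fun ⟨E⟩ => ⟨(e.subquotientMap _ _).trans E⟩⟩

theorem hasMultiplicity_fin_pi [IsSimpleModule A L] (n : ℕ) :
    HasMultiplicity A (Fin n → L) L n := by
  let c : ℕ → Submodule A (Fin n → L) := fun j => Submodule.pi {k : Fin n | j ≤ k} fun _ => ⊥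
  have layer : ∀ j (hj : j < n), (↥(c (j + 1)) ⧸ (c j).comap (c (j + 1)).subtype) ≃ₗ[A] L := by
    intro j hj
    have hc : c j = Submodule.pi ({k : Fin n | j + 1 ≤ k} ∪ {⟨j, hj⟩}) fun _ => ⊥ := by
      refine congrArg (Submodule.pi · _) (Set.ext fun k => ?_)
      simp only [Set.mem_ofPred_eq, Set.union_singleton, Set.mem_insert_iff, Fin.ext_iff]
      omega
    have hdisj : Disjoint {k : Fin n | j + 1 ≤ k} {(⟨j, hj⟩ : Fin n)} := by simp
    exact (Submodule.quotEquivOfEq _ _ (by rw [hc])).trans <|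
      (Submodule.piQuotientPiUnionEquiv _ hdisj).trans <|
        (LinearEquiv.funUnique _ A _).trans (Submodule.quotEquivOfEqBot ⊥ rfl)
  refine ⟨n, c, ?_, ?_, fun j _ v hv k hk => hv k (Nat.le_of_succ_le hk),
    fun j hj => IsSimpleModule.congr (layer j hj), ?_⟩
  · ext v; simp [c, funext_iff]
  · ext v; simp [c]
  · rw [Nat.card_congr (Equiv.subtypeUnivEquiv fun j => ⟨layer j.1 j.2⟩)]
    simp

theorem hasMultiplicity_pi [IsSimpleModule A L] (ι : Type*) [Finite ι] :
    HasMultiplicity A (ι → L) L (Nat.card ι) :=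
  (hasMultiplicity_fin_pi _).of_linearEquiv (LinearEquiv.funCongrLeft A L (Finite.equivFin ι))

end HasMultiplicity

namespace IsDiscreteValuationRing

variable {R : Type*} [CommRing R] [IsDomain R] [IsDiscreteValuationRing R]

theorem mem_maximalIdeal_pow_iff_le_addVal {x : R} {n : ℕ} :
    x ∈ IsLocalRing.maximalIdeal R ^ n ↔ (n : ℕ∞) ≤ addVal R x := by
  obtain ⟨ϖ, hϖ⟩ := exists_irreducible R
  rw [hϖ.maximalIdeal_eq, Ideal.span_singleton_pow, Ideal.mem_span_singleton,
    ← addVal_le_iff_dvd, hϖ.addVal_pow]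

theorem addVal_eq_iff {x : R} {n : ℕ} :
    addVal R x = n ↔
      x ∈ IsLocalRing.maximalIdeal R ^ n ∧ x ∉ IsLocalRing.maximalIdeal R ^ (n + 1) := by
  rw [mem_maximalIdeal_pow_iff_le_addVal, mem_maximalIdeal_pow_iff_le_addVal]
  induction addVal R x using ENat.recTopCoe
  · simp
  · simp only [Nat.cast_inj, Nat.cast_le]
    omega

theorem addVal_prod {ι : Type*} (s : Finset ι) (x : ι → R) :
    addVal R (∏ i ∈ s, x i) = ∑ i ∈ s, addVal R (x i) := by
  classical
  induction s using Finset.induction_on with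
  | empty => simp
  | insert a s ha ih => rw [Finset.prod_insert ha, Finset.sum_insert ha, addVal_mul, ih]

end IsDiscreteValuationRing

theorem sum_range_mul_card_fiber_eq_sum {I : Type*} [Fintype I] (ν : I → ℕ) {m : ℕ}
    (hm : ∀ T, ν T < m) :
    ∑ i ∈ Finset.range m, i * Nat.card {T // ν T = i} = ∑ T, ν T := by
  classical
  rw [← Finset.sum_fiberwise_of_maps_to (fun T _ => Finset.mem_range.mpr (hm T))]
  refine Finset.sum_congr rfl fun i _ => ?_
  rw [Finset.sum_congr rfl fun T hT => (Finset.mem_filter.mp hT).2, Finset.sum_const,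
    smul_eq_mul, mul_comm, Nat.card_eq_fintype_card, Fintype.card_subtype]

namespace LinearMap

variable {R : Type*} [CommRing R] {M : Type*} [AddCommGroup M] [Module R M]
  {I : Type*} [DecidableEq I] {f g : Module.Basis I R M} {B : M →ₗ[R] M →ₗ[R] R} {d : I → R}

theorem apply_right_eq_repr_mul (hfg : ∀ S T, B (f S) (g T) = if S = T then d T else 0)
    (x : M) (T : I) : B x (g T) = f.repr x T * d T := by
  have h := f.ext (f₁ := B.flip (g T)) (f₂ := d T • f.coord T) fun S => by
    simp [hfg, Finsupp.single_apply]
  simpa [mul_comm] using LinearMap.congr_fun h x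

theorem apply_left_eq_repr_mul (hfg : ∀ S T, B (f S) (g T) = if S = T then d T else 0)
    (T : I) (y : M) : B (f T) y = g.repr y T * d T := by
  have h := g.ext (f₁ := B (f T)) (f₂ := d T • g.coord T) fun S => by
    by_cases hTS : T = S <;> simp [hfg, hTS]
  simpa [mul_comm] using LinearMap.congr_fun h y

end LinearMap

section CoordinateFiltration

variable {R : Type*} [CommRing R] {M : Type*} [AddCommGroup M] [Module R M]
  {I : Type*} [Finite I]

noncomputable def Module.Basis.coordFiltration (f : Module.Basis I R M) (p : Ideal R)
    (ν : I → ℕ) (i : ℕ) : Submodule R M :=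
  (Submodule.pi {T | ν T < i} fun _ => p).map (f.equivFun.symm : (I → R) →ₗ[R] M)

theorem Module.Basis.mem_coordFiltration {f : Module.Basis I R M} {p : Ideal R} {ν : I → ℕ}
    {i : ℕ} {x : M} : x ∈ f.coordFiltration p ν i ↔ ∀ T, ν T < i → f.repr x T ∈ p := by
  simp [Module.Basis.coordFiltration, Submodule.mem_map_equiv]

theorem hasMultiplicity_coordFiltration_layer (f : Module.Basis I R M) (p : Ideal R)
    [p.IsMaximal] (ν : I → ℕ) (i : ℕ) :
    HasMultiplicity R
      (↥(f.coordFiltration p ν i) ⧸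
        (f.coordFiltration p ν (i + 1)).comap (f.coordFiltration p ν i).subtype)
      (R ⧸ p) (Nat.card {T // ν T = i}) := by
  have : IsSimpleModule R (R ⧸ p) := isSimpleModule_iff_isCoatom.mpr Ideal.IsMaximal.out
  have hunion : {T | ν T < i + 1} = {T | ν T < i} ∪ {T | ν T = i} := by
    ext T; simp only [Set.mem_ofPred_eq, Set.mem_union]; omega
  have hdisj : Disjoint {T | ν T < i} {T | ν T = i} :=
    Set.disjoint_left.mpr fun T (hlt : ν T < i) (heq : ν T = i) => hlt.ne heq
  let P : ℕ → Submodule R (I → R) := fun j => Submodule.pi {T | ν T < j} fun _ => p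
  exact (hasMultiplicity_pi {T | ν T = i}).of_linearEquiv
    ((Submodule.piQuotientPiUnionEquiv (fun _ => p) hdisj).symm ≪≫ₗ
      Submodule.quotEquivOfEq _ _ (by rw [← hunion]) ≪≫ₗ
      f.equivFun.symm.subquotientMap (P i) (P (i + 1)))

theorem sup_maximalIdeal_smul_top_eq_coordFiltration [IsLocalRing R] [DecidableEq I]
    {f g : Module.Basis I R M} {B : M →ₗ[R] M →ₗ[R] R} {d : I → R} {ν : I → ℕ}
    {N : ℕ → Submodule R M}
    (hfg : ∀ S T, B (f S) (g T) = if S = T then d T else 0)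
    (hν : ∀ T, d T ∈ maximalIdeal R ^ ν T ∧ d T ∉ maximalIdeal R ^ (ν T + 1))
    (hN : ∀ i x, x ∈ N i ↔ ∀ y, B x y ∈ maximalIdeal R ^ i) (i : ℕ) :
    N i ⊔ maximalIdeal R • ⊤ = f.coordFiltration (maximalIdeal R) ν i := by
  have : Fintype I := Fintype.ofFinite I
  apply le_antisymm
  · refine sup_le (fun x hx => Module.Basis.mem_coordFiltration.mpr fun T hT => ?_) ?_
    · -- a unit coordinate `x_T` would put `d T = x_T⁻¹ (x_T d T)` into `℘ ^ i ⊆ ℘ ^ (ν T + 1)`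
      by_contra hxT
      refine (hν T).2 ((Ideal.unit_mul_mem_iff_mem _ (notMem_maximalIdeal.mp hxT)).mp ?_)
      rw [← B.apply_right_eq_repr_mul hfg]
      exact Ideal.pow_le_pow_right hT ((hN i x).mp hx (g T))
    · refine Submodule.smul_le.mpr fun a ha x _ =>
        Module.Basis.mem_coordFiltration.mpr fun T _ => ?_
      simpa using Ideal.mul_mem_right _ _ ha
  · intro x hx
    rw [← f.sum_repr x]
    refine Submodule.sum_mem _ fun T _ => ?_
    rcases lt_or_ge (ν T) i with hT | hT
    · exact Submodule.mem_sup_right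
        (Submodule.smul_mem_smul (Module.Basis.mem_coordFiltration.mp hx T hT) trivial)
    · refine Submodule.mem_sup_left (Submodule.smul_mem _ _ ((hN i (f T)).mpr fun y => ?_))
      rw [B.apply_left_eq_repr_mul hfg]
      exact Ideal.mul_mem_left _ _ (Ideal.pow_le_pow_right hT (hν T).1)

end CoordinateFiltration

theorem jantzen_layer_dimension_general
    (R : Type*) [CommRing R] [IsDomain R] [IsDiscreteValuationRing R]
    (M : Type*) [AddCommGroup M] [Module R M]
    (I : Type*) [Fintype I] [DecidableEq I]
    (f g : Module.Basis I R M)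
    (B : M →ₗ[R] M →ₗ[R] R)
    (d : I → R)
    (hfg : ∀ S T : I, B (f S) (g T) = if S = T then d T else 0)
    (ν : I → ℕ)
    (hν : ∀ T : I, d T ∈ (maximalIdeal R) ^ (ν T) ∧ d T ∉ (maximalIdeal R) ^ (ν T + 1))
    (N : ℕ → Submodule R M)
    (hN : ∀ (i : ℕ) (x : M), x ∈ N i ↔ ∀ y : M, B x y ∈ (maximalIdeal R) ^ i)
    (νdet : ℕ)
    (hdet : (Matrix.of fun S T : I => B (f S) (g T)).det ∈ (maximalIdeal R) ^ νdet ∧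
            (Matrix.of fun S T : I => B (f S) (g T)).det ∉ (maximalIdeal R) ^ (νdet + 1)) :
    (∀ i : ℕ,
      HasMultiplicity R
        (↥(N i ⊔ (maximalIdeal R) • (⊤ : Submodule R M)) ⧸
          Submodule.comap (N i ⊔ (maximalIdeal R) • (⊤ : Submodule R M)).subtype
            (N (i + 1) ⊔ (maximalIdeal R) • (⊤ : Submodule R M)))
        (R ⧸ maximalIdeal R)
        (Nat.card {T : I // ν T = i})) ∧
    (∀ m : ℕ, (∀ T : I, ν T < m) →
      ∑ i ∈ Finset.range m, i * Nat.card {T : I // ν T = i} = νdet) := by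
  have hfilt := sup_maximalIdeal_smul_top_eq_coordFiltration hfg hν hN
  refine ⟨fun i => ?_, fun m hm => ?_⟩
  · rw [hfilt, hfilt]
    exact hasMultiplicity_coordFiltration_layer f _ ν i
  have gram : Matrix.of (fun S T => B (f S) (g T)) = Matrix.diagonal d :=
    Matrix.ext fun S T => by by_cases h : S = T <;> simp [hfg, h]
  have hνdet : (νdet : ℕ∞) = ∑ T, ν T := by
    rw [← IsDiscreteValuationRing.addVal_eq_iff.mpr hdet, gram, Matrix.det_diagonal,
      IsDiscreteValuationRing.addVal_prod]
    push_cast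
    exact Finset.sum_congr rfl fun T _ => IsDiscreteValuationRing.addVal_eq_iff.mpr (hν T)
  rw [sum_range_mul_card_fiber_eq_sum ν hm]
  exact_mod_cast hνdet.symm

/-- Let `R` be a DVR with maximal ideal `℘` and residue field `F = R/℘`, and let `M`
be a finite free `R`-module with a bilinear form admitting dual bases with
`⟨f_S, g_T⟩ = δ_{ST} d_T`, `d_T ≠ 0`.  The Jantzen layer
`J_i = (M(i)+℘M)/(M(i+1)+℘M)` has `F`-dimension (equivalently, `R`-length, i.e. the
multiplicity of the residue field `F` as a composition factor) equal to
`#{T : ν(d_T) = i}`; consequently `Σ_i i · dim_F J_i` equals the valuation of the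
determinant of the Gram matrix. -/
theorem jantzen_layer_dimension
    (R : Type*) [CommRing R] [IsDomain R] [IsDiscreteValuationRing R]
    (M : Type*) [AddCommGroup M] [Module R M] [Module.Finite R M] [Module.Free R M]
    (I : Type*) [Fintype I] [DecidableEq I]
    (f g : Module.Basis I R M)
    (B : M →ₗ[R] M →ₗ[R] R)
    (d : I → R) (hd : ∀ T, d T ≠ 0)
    (hfg : ∀ S T : I, B (f S) (g T) = if S = T then d T else 0)
    (ν : I → ℕ)
    (hν : ∀ T : I, d T ∈ (maximalIdeal R) ^ (ν T) ∧ d T ∉ (maximalIdeal R) ^ (ν T + 1))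
    (N : ℕ → Submodule R M)
    (hN : ∀ (i : ℕ) (x : M), x ∈ N i ↔ ∀ y : M, B x y ∈ (maximalIdeal R) ^ i)
    (νdet : ℕ)
    (hdet : (Matrix.of fun S T : I => B (f S) (g T)).det ∈ (maximalIdeal R) ^ νdet ∧
            (Matrix.of fun S T : I => B (f S) (g T)).det ∉ (maximalIdeal R) ^ (νdet + 1)) :
    (∀ i : ℕ,
      HasMultiplicity R
        (↥(N i ⊔ (maximalIdeal R) • (⊤ : Submodule R M)) ⧸
          Submodule.comap (N i ⊔ (maximalIdeal R) • (⊤ : Submodule R M)).subtype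
            (N (i + 1) ⊔ (maximalIdeal R) • (⊤ : Submodule R M)))
        (R ⧸ maximalIdeal R)
        (Nat.card {T : I // ν T = i})) ∧
    (∀ m : ℕ, (∀ T : I, ν T < m) →
      ∑ i ∈ Finset.range m, i * Nat.card {T : I // ν T = i} = νdet) :=
  jantzen_layer_dimension_general R M I f g B d hfg ν hν N hN νdet hdet
end

section
/- Let R be a DVR with residue field F, M a finite free R-module with bilinear form, and M(i) its ℘^i-filtration. The induced images M̄(i) = (M(i) + ℘M)/℘M in M̄ = M/℘M form a decreasing filtration of F-vector spaces with M̄(1) = rad(⟨·,·⟩ mod ℘), i.e., the first Jantzen layer M̄(0)/M̄(1) is the quotient of M̄ by the radical of the reduced bilinear form. -/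
open IsLocalRing

/-! Since `℘M` is the kernel of `M → M̄`, the image of `M(i) + ℘M` is the image of `M(i)`, and
`M(1) = {x | B x y ∈ ℘ for all y}` is exactly the preimage of the radical of the reduced form. -/

section BilinFiltration

variable {R M : Type*} [CommRing R] [AddCommGroup M] [Module R M] {I : Ideal R}
  {B : M →ₗ[R] M →ₗ[R] R} {MI : ℕ → Submodule R M}

theorem Submodule.map_mkQ_sup_self (N P : Submodule R M) : (N ⊔ P).map P.mkQ = N.map P.mkQ := by
  rw [Submodule.map_sup, Submodule.mkQ_map_self, sup_bot_eq]

theorem bilinFiltration_succ_le (hMI : ∀ (i : ℕ) (x : M), x ∈ MI i ↔ ∀ y : M, B x y ∈ I ^ i)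
    (i : ℕ) : MI (i + 1) ≤ MI i := fun x hx ↦
  (hMI i x).2 fun y ↦ Ideal.pow_le_pow_right i.le_succ ((hMI (i + 1) x).1 hx y)

theorem bilinFiltration_zero (hMI : ∀ (i : ℕ) (x : M), x ∈ MI i ↔ ∀ y : M, B x y ∈ I ^ i) :
    MI 0 = ⊤ :=
  eq_top_iff.2 fun x _ ↦ (hMI 0 x).2 fun y ↦ by simp

variable {Bbar : (M ⧸ I • (⊤ : Submodule R M)) →ₗ[R] (M ⧸ I • (⊤ : Submodule R M)) →ₗ[R] (R ⧸ I)}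

theorem reducedForm_mk_eq_zero_iff
    (hBbar : ∀ x y : M, Bbar (Submodule.Quotient.mk x) (Submodule.Quotient.mk y) =
      Ideal.Quotient.mk I (B x y)) (x : M) :
    Bbar (Submodule.Quotient.mk x) = 0 ↔ ∀ y : M, B x y ∈ I := by
  rw [LinearMap.ext_iff, (Submodule.Quotient.mk_surjective _).forall]
  simp [hBbar, Ideal.Quotient.eq_zero_iff_mem]

theorem bilinFiltration_one_eq_comap_ker
    (hMI : ∀ (i : ℕ) (x : M), x ∈ MI i ↔ ∀ y : M, B x y ∈ I ^ i)
    (hBbar : ∀ x y : M, Bbar (Submodule.Quotient.mk x) (Submodule.Quotient.mk y) =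
      Ideal.Quotient.mk I (B x y)) :
    MI 1 = (LinearMap.ker Bbar).comap (I • ⊤ : Submodule R M).mkQ := by
  ext x
  simp [hMI, reducedForm_mk_eq_zero_iff hBbar]

end BilinFiltration

theorem jantzen_first_layer_general
    (R : Type*) [CommRing R] [IsDomain R] [IsDiscreteValuationRing R]
    (M : Type*) [AddCommGroup M] [Module R M]
    (B : M →ₗ[R] M →ₗ[R] R)
    (MI : ℕ → Submodule R M)
    (hMI : ∀ (i : ℕ) (x : M), x ∈ MI i ↔ ∀ y : M, B x y ∈ (maximalIdeal R) ^ i)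
    (Bbar : (M ⧸ ((maximalIdeal R) • (⊤ : Submodule R M))) →ₗ[R]
      (M ⧸ ((maximalIdeal R) • (⊤ : Submodule R M))) →ₗ[R] (R ⧸ maximalIdeal R))
    (hBbar : ∀ x y : M,
      Bbar (Submodule.Quotient.mk x) (Submodule.Quotient.mk y) =
        Ideal.Quotient.mk (maximalIdeal R) (B x y)) :
    (∀ i : ℕ,
      (MI (i + 1) ⊔ (maximalIdeal R) • (⊤ : Submodule R M)).map
          ((maximalIdeal R) • (⊤ : Submodule R M)).mkQ ≤
        (MI i ⊔ (maximalIdeal R) • (⊤ : Submodule R M)).map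
          ((maximalIdeal R) • (⊤ : Submodule R M)).mkQ) ∧
    ((MI 0 ⊔ (maximalIdeal R) • (⊤ : Submodule R M)).map
        ((maximalIdeal R) • (⊤ : Submodule R M)).mkQ = ⊤) ∧
    (((MI 1 ⊔ (maximalIdeal R) • (⊤ : Submodule R M)).map
        ((maximalIdeal R) • (⊤ : Submodule R M)).mkQ : Set _) =
      {x : M ⧸ ((maximalIdeal R) • (⊤ : Submodule R M)) | ∀ y, Bbar x y = 0}) := by
  simp only [Submodule.map_mkQ_sup_self]
  refine ⟨fun i ↦ Submodule.map_mono (bilinFiltration_succ_le hMI i), ?_, ?_⟩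
  · rw [bilinFiltration_zero hMI, Submodule.map_top, Submodule.range_mkQ]
  · rw [bilinFiltration_one_eq_comap_ker hMI hBbar,
      Submodule.map_comap_eq_of_surjective (Submodule.mkQ_surjective _)]
    ext x
    simp [LinearMap.ext_iff]

/-- Let `R` be a DVR with maximal ideal `℘` and residue field `F = R/℘`, and `M` a
finite free `R`-module with a bilinear form, with `℘^i`-filtration `M(i)`.  The
images `M̄(i) = (M(i) + ℘M)/℘M` in `M̄ = M/℘M` form a decreasing filtration with
`M̄(0) = M̄` and `M̄(1)` equal to the radical of the reduced bilinear form; i.e. the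
first Jantzen layer `M̄(0)/M̄(1)` is the quotient of `M̄` by the radical of the
reduced form. -/
theorem jantzen_first_layer
    (R : Type*) [CommRing R] [IsDomain R] [IsDiscreteValuationRing R]
    (M : Type*) [AddCommGroup M] [Module R M] [Module.Finite R M] [Module.Free R M]
    (B : M →ₗ[R] M →ₗ[R] R)
    (MI : ℕ → Submodule R M)
    (hMI : ∀ (i : ℕ) (x : M), x ∈ MI i ↔ ∀ y : M, B x y ∈ (maximalIdeal R) ^ i)
    (Bbar : (M ⧸ ((maximalIdeal R) • (⊤ : Submodule R M))) →ₗ[R]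
      (M ⧸ ((maximalIdeal R) • (⊤ : Submodule R M))) →ₗ[R] (R ⧸ maximalIdeal R))
    (hBbar : ∀ x y : M,
      Bbar (Submodule.Quotient.mk x) (Submodule.Quotient.mk y) =
        Ideal.Quotient.mk (maximalIdeal R) (B x y)) :
    (∀ i : ℕ,
      (MI (i + 1) ⊔ (maximalIdeal R) • (⊤ : Submodule R M)).map
          ((maximalIdeal R) • (⊤ : Submodule R M)).mkQ ≤
        (MI i ⊔ (maximalIdeal R) • (⊤ : Submodule R M)).map
          ((maximalIdeal R) • (⊤ : Submodule R M)).mkQ) ∧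
    ((MI 0 ⊔ (maximalIdeal R) • (⊤ : Submodule R M)).map
        ((maximalIdeal R) • (⊤ : Submodule R M)).mkQ = ⊤) ∧
    (((MI 1 ⊔ (maximalIdeal R) • (⊤ : Submodule R M)).map
        ((maximalIdeal R) • (⊤ : Submodule R M)).mkQ : Set _) =
      {x : M ⧸ ((maximalIdeal R) • (⊤ : Submodule R M)) | ∀ y, Bbar x y = 0}) :=
  jantzen_first_layer_general R M B MI hMI Bbar hBbar
end

section
/- Let R be a DVR and M a finite free R-module with a bilinear form whose Gram matrix has nonzero determinant. Then the ℘^i-filtration M(i) satisfies M(i) ⊇ ℘^i M for all i, and there exists k such that M(i) ⊆ ℘ M(0)' for all i > k where the induced filtration on M/℘M stabilizes; in particular the Jantzen filtration of M/℘M is a finite chain reaching 0. -/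
/-!
If `x ∈ M(i)`, its coordinate vector `c` in the basis satisfies `c ᵥ* G ∈ ℘^i` entrywise, where
`G` is the Gram matrix; multiplying by the adjugate gives `det G • c ∈ ℘^i`. By Krull's
intersection theorem `det G ∉ ℘^k` for some `k`, so for `i > k` no coordinate of `x` can be a
unit, i.e. `x ∈ ℘M`.
-/

open IsLocalRing Matrix

section

variable {R M : Type*} [CommRing R] [AddCommGroup M] [Module R M]

theorem LinearMap.map_mem_of_mem_smul_top (f : M →ₗ[R] R) {J : Ideal R} {x : M}
    (hx : x ∈ J • (⊤ : Submodule R M)) : f x ∈ J :=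
  (Submodule.smul_le (P := Submodule.comap f J)).mpr
    (fun r hr m _ => by simpa using J.mul_mem_right (f m) hr) hx

theorem Module.Basis.mem_smul_top_of_repr_mem {ι : Type*} [Fintype ι] (b : Module.Basis ι R M)
    {J : Ideal R} {x : M} (h : ∀ i, b.repr x i ∈ J) : x ∈ J • (⊤ : Submodule R M) := by
  rw [← b.sum_repr x]
  exact Submodule.sum_mem _ fun i _ => Submodule.smul_mem_smul (h i) Submodule.mem_top

theorem LinearMap.apply_basis_eq_vecMul_toMatrix₂ {ι : Type*} [Fintype ι] [DecidableEq ι]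
    (b : Module.Basis ι R M) (B : M →ₗ[R] M →ₗ[R] R) (x : M) (j : ι) :
    B x (b j) = (b.repr x ᵥ* LinearMap.toMatrix₂ b b B) j := by
  nth_rw 1 [← b.sum_repr x]
  simp only [map_sum, map_smul, LinearMap.sum_apply, LinearMap.smul_apply,
    smul_eq_mul, vecMul, dotProduct, LinearMap.toMatrix₂_apply]

section Matrix

variable {n : Type*} [Fintype n] [DecidableEq n]

theorem Matrix.det_mul_mem_of_vecMul_mem (G : Matrix n n R) {J : Ideal R} {c : n → R}
    (h : ∀ j, (c ᵥ* G) j ∈ J) (i : n) : G.det * c i ∈ J := by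
  have hadj : G.det * c i = (c ᵥ* G ᵥ* G.adjugate) i := by
    rw [vecMul_vecMul, mul_adjugate, vecMul_smul, vecMul_one, Pi.smul_apply, smul_eq_mul]
  rw [hadj]
  exact J.sum_mem fun j _ => J.mul_mem_right _ (h j)

theorem Matrix.mem_maximalIdeal_of_vecMul_mem [IsLocalRing R] (G : Matrix n n R) {J : Ideal R}
    (hG : G.det ∉ J) {c : n → R} (h : ∀ j, (c ᵥ* G) j ∈ J) (i : n) :
    c i ∈ maximalIdeal R := by
  by_contra hc
  exact hG <| (J.mul_unit_mem_iff_mem (notMem_maximalIdeal.mp hc)).mp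
    (G.det_mul_mem_of_vecMul_mem h i)

end Matrix

theorem LinearMap.mem_maximalIdeal_smul_top_of_apply_mem [IsLocalRing R] {ι : Type*} [Fintype ι]
    [DecidableEq ι] (b : Module.Basis ι R M) (B : M →ₗ[R] M →ₗ[R] R) {J : Ideal R}
    (hdet : (LinearMap.toMatrix₂ b b B).det ∉ J) {x : M} (hx : ∀ y, B x y ∈ J) :
    x ∈ maximalIdeal R • (⊤ : Submodule R M) :=
  b.mem_smul_top_of_repr_mem <| (LinearMap.toMatrix₂ b b B).mem_maximalIdeal_of_vecMul_mem hdet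
    fun j => apply_basis_eq_vecMul_toMatrix₂ b B x j ▸ hx (b j)

theorem IsLocalRing.exists_notMem_maximalIdeal_pow [IsNoetherianRing R] [IsLocalRing R] {r : R}
    (hr : r ≠ 0) : ∃ k : ℕ, r ∉ maximalIdeal R ^ k := by
  by_contra! h
  apply hr
  rw [← Ideal.mem_bot, ← Ideal.iInf_pow_eq_bot_of_isLocalRing _ (maximalIdeal.isMaximal R).ne_top,
    Submodule.mem_iInf]
  exact h

end

theorem jantzen_filtration_finite_general
    (R : Type*) [CommRing R] [IsDomain R] [IsDiscreteValuationRing R]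
    (M : Type*) [AddCommGroup M] [Module R M]
    (I : Type*) [Fintype I] [DecidableEq I]
    (b : Module.Basis I R M)
    (B : M →ₗ[R] M →ₗ[R] R)
    (hdet : (Matrix.of fun S T : I => B (b S) (b T)).det ≠ 0)
    (MI : ℕ → Submodule R M)
    (hMI : ∀ (i : ℕ) (x : M), x ∈ MI i ↔ ∀ y : M, B x y ∈ (maximalIdeal R) ^ i) :
    (∀ i : ℕ, ((maximalIdeal R) ^ i) • (⊤ : Submodule R M) ≤ MI i) ∧
    (∃ k : ℕ, ∀ i : ℕ, k < i → MI i ≤ (maximalIdeal R) • (⊤ : Submodule R M)) := by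
  have hG : (Matrix.of fun S T : I => B (b S) (b T)) = LinearMap.toMatrix₂ b b B := by
    ext; simp [LinearMap.toMatrix₂_apply]
  obtain ⟨k, hk⟩ := exists_notMem_maximalIdeal_pow (hG ▸ hdet)
  refine ⟨fun i x hx => (hMI i x).2 fun y => (B.flip y).map_mem_of_mem_smul_top hx,
    k, fun i hki x hx => ?_⟩
  exact B.mem_maximalIdeal_smul_top_of_apply_mem b
    (fun h => hk (Ideal.pow_le_pow_right hki.le h)) ((hMI i x).1 hx)

/-- Let `R` be a DVR and `M` a finite free `R`-module with a bilinear form whose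
Gram matrix has nonzero determinant.  Then the `℘^i`-filtration satisfies
`M(i) ⊇ ℘^i M` for all `i`, and there exists `k` such that `M(i) ⊆ ℘M` for all
`i > k`; in particular the induced Jantzen filtration of `M/℘M` is a finite chain
reaching `0`. -/
theorem jantzen_filtration_finite
    (R : Type*) [CommRing R] [IsDomain R] [IsDiscreteValuationRing R]
    (M : Type*) [AddCommGroup M] [Module R M] [Module.Finite R M] [Module.Free R M]
    (I : Type*) [Fintype I] [DecidableEq I]
    (b : Module.Basis I R M)
    (B : M →ₗ[R] M →ₗ[R] R)
    (hdet : (Matrix.of fun S T : I => B (b S) (b T)).det ≠ 0)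
    (MI : ℕ → Submodule R M)
    (hMI : ∀ (i : ℕ) (x : M), x ∈ MI i ↔ ∀ y : M, B x y ∈ (maximalIdeal R) ^ i) :
    (∀ i : ℕ, ((maximalIdeal R) ^ i) • (⊤ : Submodule R M) ≤ MI i) ∧
    (∃ k : ℕ, ∀ i : ℕ, k < i → MI i ≤ (maximalIdeal R) • (⊤ : Submodule R M)) :=
  jantzen_filtration_finite_general R M I b B hdet MI hMI
end
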